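/- arXiv:1407.0215 — 2 statements merged into one kernel-verified Lean document; each statement's English description precedes it below -/
import Mathlib

section
/- Let x be a state with m breakpoints a₁ < ⋯ < a_m and let d₀(x) = min over consecutive gaps (with a₀ = 0, a_{m+1} = 1) of a_{i+1} − a_i. Then for any α with 0 < α < d₀(x)/3, there exists a state y with exactly m breakpoints, all of which are rational numbers, such that d(y,x) < α. -/
open Set MeasureTheory

namespace CWR

/-- A "lineage": a function from ℝ (representing [0,1)) to subsets of {1,…,N}. -/
abbrev Lin (N : ℕ) := ℝ → Finset (Fin N)

/-- Right local constancy (right continuity for piecewise-constant functions) at `s`. -/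
def RightConstAt (N : ℕ) (f : Lin N) (s : ℝ) : Prop :=
  ∃ ε > 0, ∀ u ∈ Set.Ico s (s + ε), f u = f s

/-- Local constancy (continuity for piecewise-constant functions) at `s`. -/
def ContAt (N : ℕ) (f : Lin N) (s : ℝ) : Prop :=
  ∃ ε > 0, ∀ u ∈ Set.Ioo (s - ε) (s + ε), f u = f s

/-- Membership in `S_{[0,1)}(𝒫)`: right-continuous, piecewise constant with at most
finitely many discontinuity points, normalized to `∅` off `[0,1)`. -/
def MemS (N : ℕ) (f : Lin N) : Prop :=
  (∀ s ∈ Set.Ico (0:ℝ) 1, RightConstAt N f s) ∧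
  {s ∈ Set.Ioo (0:ℝ) 1 | ¬ ContAt N f s}.Finite ∧
  (∀ s, s ∉ Set.Ico (0:ℝ) 1 → f s = ∅)

/-- The discrete metric `d_p` on `𝒫`. -/
noncomputable def dp (N : ℕ) (A B : Finset (Fin N)) : ℝ := if A = B then 0 else 1

/-- The metric `d_L(f,h) = ∫₀¹ d_p(f(s),h(s)) ds`. -/
noncomputable def dL (N : ℕ) (f h : Lin N) : ℝ :=
  ∫ s in Set.Ioo (0:ℝ) 1, dp N (f s) (h s)

/-- A state: a finite set of lineages whose nonempty values partition `{1,…,N}`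
at each point of `[0,1)`, none identically empty. -/
def IsState (N : ℕ) (x : Set (Lin N)) : Prop :=
  x.Finite ∧ (∀ f ∈ x, MemS N f) ∧
  (∀ f ∈ x, ∃ s ∈ Set.Ico (0:ℝ) 1, f s ≠ ∅) ∧
  (∀ s ∈ Set.Ico (0:ℝ) 1,
    (∀ n : Fin N, ∃ f ∈ x, n ∈ f s) ∧
    (∀ f ∈ x, ∀ g ∈ x, f ≠ g → Disjoint (f s) (g s)))

/-- The set of breakpoints of a state. -/
def Bp (N : ℕ) (x : Set (Lin N)) : Set ℝ :=
  {s ∈ Set.Ioo (0:ℝ) 1 | ∃ f ∈ x, ¬ ContAt N f s}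

/-- The number of breakpoints of a state. -/
noncomputable def nBp (N : ℕ) (x : Set (Lin N)) : ℕ := (Bp N x).ncard

/-- Distance from a lineage to a set of lineages. -/
noncomputable def dLset (N : ℕ) (f : Lin N) (y : Set (Lin N)) : ℝ :=
  sInf (dL N f '' y)

/-- The metric `d` on the state space `E`. -/
noncomputable def dE (N : ℕ) (x y : Set (Lin N)) : ℝ :=
  max (sSup ((fun f => dLset N f y) '' x)) (sSup ((fun h => dLset N h x) '' y))
  + |(x.ncard : ℝ) - (y.ncard : ℝ)| + |(nBp N x : ℝ) - (nBp N y : ℝ)|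

/-- The minimal gap `d₀(x)` between consecutive points of `{0} ∪ Bp(x) ∪ {1}`
(equivalently, the minimum of `b - a` over pairs `a < b` of such points). -/
noncomputable def d0 (N : ℕ) (x : Set (Lin N)) : ℝ :=
  sInf {t : ℝ | ∃ a ∈ insert (0:ℝ) (insert 1 (Bp N x)),
    ∃ b ∈ insert (0:ℝ) (insert 1 (Bp N x)), a < b ∧ t = b - a}

/-- Pointwise union of two lineages: `(f ∨ h)(s) = f(s) ∪ h(s)`. -/
def join (N : ℕ) (f h : Lin N) : Lin N := fun s => f s ∪ h s

/-- Left truncation `f^{(u−)}`. -/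
noncomputable def truncL (N : ℕ) (f : Lin N) (u : ℝ) : Lin N := fun s => if s < u then f s else ∅

/-- Right truncation `f^{(u+)}`. -/
noncomputable def truncR (N : ℕ) (f : Lin N) (u : ℝ) : Lin N := fun s => if s < u then ∅ else f s

/-- Coalescence of lineages `f` and `g` in state `x`. -/
def coal (N : ℕ) (x : Set (Lin N)) (f g : Lin N) : Set (Lin N) :=
  insert (join N f g) (x \ {f, g})

/-- Recombination of lineage `f` of state `x` at breakpoint `u`. -/
def recomb (N : ℕ) (x : Set (Lin N)) (f : Lin N) (u : ℝ) : Set (Lin N) :=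
  insert (truncL N f u) (insert (truncR N f u) (x \ {f}))

/-- Left endpoint of the support of a lineage. -/
noncomputable def startOf (N : ℕ) (f : Lin N) : ℝ :=
  sInf {s | s ∈ Set.Ico (0:ℝ) 1 ∧ f s ≠ ∅}

/-- The ranking order on lineages: smaller left endpoint of support,
ties broken by the minimal element carried at that endpoint. -/
def rankLT (N : ℕ) (f g : Lin N) : Prop :=
  startOf N f < startOf N g ∨
  (startOf N f = startOf N g ∧ (f (startOf N f)).min < (g (startOf N g)).min)

def rankLE (N : ℕ) (f g : Lin N) : Prop := f = g ∨ rankLT N f g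

/-- `f` is the first lineage of `x` in the ranking order. -/
def isFirst (N : ℕ) (x : Set (Lin N)) (f : Lin N) : Prop := ∀ g ∈ x, rankLE N f g

open Classical

/-- `b_i(x)`: for the first lineage, `inf{v : f(v) ≠ {1,…,N}}`; otherwise the
left endpoint of the support. -/
noncomputable def bOf (N : ℕ) (x : Set (Lin N)) (f : Lin N) : ℝ :=
  if isFirst N x f then sInf {v | v ∈ Set.Ico (0:ℝ) 1 ∧ f v ≠ Finset.univ}
  else startOf N f

/-- `e_i(x)`: the right endpoint of the ancestral material of `f`, capped at 1. -/
noncomputable def eOf (N : ℕ) (f : Lin N) : ℝ :=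
  min (sInf {u : ℝ | ∀ s, u < s → s < 1 → f s = ∅}) 1

open Classical

/-- The q-pair kernel `q(x,A)` of the coalescent-with-recombination process. -/
noncomputable def qker (N : ℕ) (ρ : ℝ) (p : ℝ → ℝ) (x : Set (Lin N))
    (A : Set (Set (Lin N))) : ℝ :=
  if hx : x.Finite ∧ 2 ≤ x.ncard then
    (1/2) * ∑ f ∈ hx.1.toFinset, ∑ g ∈ hx.1.toFinset,
      (if f ≠ g ∧ coal N x f g ∈ A then (1:ℝ) else 0)
    + (ρ/2) * ∑ f ∈ hx.1.toFinset,
        ∫ s in Set.Ioo (bOf N x f) (eOf N f),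
          (if recomb N x f s ∈ A then p s else 0)
  else 0

/-- The lineage carrying `{1,…,N}` on all of `[0,1)`. -/
noncomputable def fullLin (N : ℕ) : Lin N := fun s => if s ∈ Set.Ico (0:ℝ) 1 then Finset.univ else ∅

/-- The absorbing state `Δ`. -/
def Δstate (N : ℕ) : Set (Lin N) := {fullLin N}

/-- The initial state `ϖ` of `N` singleton lineages. -/
def varpi (N : ℕ) : Set (Lin N) :=
  {f | ∃ j : Fin N, f = fun s => if s ∈ Set.Ico (0:ℝ) 1 then {j} else ∅}

/-- One-step reachability: `y ∈ E_x`, i.e. `y` arises from `x` by one coalescence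
or one admissible recombination. -/
def EStep (N : ℕ) (x y : Set (Lin N)) : Prop :=
  (∃ f ∈ x, ∃ g ∈ x, f ≠ g ∧ y = coal N x f g) ∨
  (∃ f ∈ x, ∃ u, bOf N x f < u ∧ u < eOf N f ∧ y = recomb N x f u)

/-- `y` arises from `x` by a recombination with breakpoint `u`. -/
def RecombStep (N : ℕ) (x y : Set (Lin N)) (u : ℝ) : Prop :=
  ∃ f ∈ x, bOf N x f < u ∧ u < eOf N f ∧ y = recomb N x f u

/-- Membership in the ARG space `G`: right-continuous piecewise-constant `E`-valued
paths with finitely many jumps, starting at `ϖ`, each jump a coalescence or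
recombination of the previous state, and no recombination breakpoint repeated. -/
def InG (N : ℕ) (g : ℝ → Set (Lin N)) : Prop :=
  ∃ (n : ℕ) (τ : ℕ → ℝ) (st : ℕ → Set (Lin N)),
    τ 0 = 0 ∧ (∀ i < n, τ i < τ (i+1)) ∧
    st 0 = varpi N ∧
    (∀ i < n, EStep N (st i) (st (i+1))) ∧
    (∀ i < n, ∀ t, τ i ≤ t → t < τ (i+1) → g t = st i) ∧
    (∀ t, τ n ≤ t → g t = st n) ∧
    (∀ i < n, ∀ j < n, i ≠ j → ∀ u v, RecombStep N (st i) (st (i+1)) u →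
      RecombStep N (st j) (st (j+1)) v → u ≠ v)

/-- All breakpoints appearing along a path. -/
def BpG (N : ℕ) (g : ℝ → Set (Lin N)) : Set ℝ := {s | ∃ t, 0 ≤ t ∧ s ∈ Bp N (g t)}

/-- A tuple of lineages ranked in the canonical order. -/
def Ranked (N : ℕ) (k : ℕ) (f : ℕ → Lin N) : Prop :=
  ∀ i j, i < j → j < k → rankLT N (f i) (f j)

end CWR

namespace CWR

open Classical

lemma dp_nonneg (N : ℕ) (A B : Finset (Fin N)) : 0 ≤ dp N A B := by
  rw [dp]; split <;> norm_num

lemma dp_le_one (N : ℕ) (A B : Finset (Fin N)) : dp N A B ≤ 1 := by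
  rw [dp]; split <;> norm_num

lemma dp_comm (N : ℕ) (A B : Finset (Fin N)) : dp N A B = dp N B A := by
  rw [dp, dp]; simp [eq_comm]

lemma dL_nonneg (N : ℕ) (f h : Lin N) : 0 ≤ dL N f h :=
  MeasureTheory.integral_nonneg fun _ => dp_nonneg N _ _

lemma dL_comm (N : ℕ) (f h : Lin N) : dL N f h = dL N h f :=
  MeasureTheory.integral_congr_ae (Filter.Eventually.of_forall fun s => dp_comm N (f s) (h s))

/-- local constancy between breakpoints -/
lemma const_between (N : ℕ) (f : Lin N)
    (hrc : ∀ u ∈ Set.Ico (0:ℝ) 1, RightConstAt N f u)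
    {c s : ℝ} (hc : 0 ≤ c) (hcs : c ≤ s) (hs : s < 1)
    (hcont : ∀ u, c < u → u ≤ s → ContAt N f u) : f s = f c := by
  set U : Set ℝ := {u | c ≤ u ∧ u ≤ s ∧ ∀ v, c ≤ v → v ≤ u → f v = f c} with hU
  have hcU : c ∈ U := ⟨le_refl c, hcs, fun v h1 h2 => by rw [le_antisymm h2 h1]⟩
  have hne : U.Nonempty := ⟨c, hcU⟩
  have hbdd : BddAbove U := ⟨s, fun u hu => hu.2.1⟩
  set w := sSup U with hw
  have hcw : c ≤ w := le_csSup hbdd hcU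
  have hws : w ≤ s := csSup_le hne fun u hu => hu.2.1
  have hbelow : ∀ v, c ≤ v → v < w → f v = f c := by
    intro v h1 h2
    obtain ⟨u, huU, hvu⟩ := exists_lt_of_lt_csSup hne h2
    exact huU.2.2 v h1 hvu.le
  have hfw : f w = f c := by
    rcases eq_or_lt_of_le hcw with h | h
    · rw [← h]
    · obtain ⟨ε, hε, hco⟩ := hcont w h hws
      have h1 : max c (w - ε/2) < w := by
        rcases le_or_gt c (w - ε/2) with h' | h'
        · rw [max_eq_right h']; linarith
        · rw [max_eq_left h'.le]; exact h
      have h2 : f (max c (w - ε/2)) = f c := hbelow _ (le_max_left _ _) h1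
      have h3 : f (max c (w - ε/2)) = f w := by
        apply hco
        constructor
        · exact lt_of_lt_of_le (by linarith) (le_max_right _ _)
        · linarith
      rw [← h3, h2]
  have hwU : w ∈ U := ⟨hcw, hws, fun v h1 h2 => by
    rcases eq_or_lt_of_le h2 with h | h2
    · rw [h, hfw]
    · exact hbelow v h1 h2⟩
  have hwseq : w = s := by
    by_contra hne'
    have hws' : w < s := lt_of_le_of_ne hws hne'
    obtain ⟨ε, hε, hco⟩ := hrc w ⟨le_trans hc hcw, lt_of_le_of_lt hws hs⟩
    have huw : w < min s (w + ε/2) := lt_min hws' (by linarith)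
    have huU : min s (w + ε/2) ∈ U := by
      refine ⟨le_trans hcw huw.le, min_le_left _ _, fun v h1 h2 => ?_⟩
      rcases le_or_gt v w with h3 | h3
      · exact hwU.2.2 v h1 h3
      · have h4 : f v = f w := by
          apply hco
          refine ⟨h3.le, lt_of_le_of_lt h2 ?_⟩
          exact lt_of_le_of_lt (min_le_right _ _) (by linarith)
        rw [h4, hfw]
    exact absurd (le_csSup hbdd huU) (not_le.2 huw)
  rw [← hwseq, hfw]

section pcv

variable {m : ℕ}

/-- piecewise-constant locator: value `w i` where `i` is the largest index with `v i ≤ s`. -/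
noncomputable def pcv (w v : Fin m → ℝ) (s : ℝ) : ℝ :=
  if h : (Finset.univ.filter (fun i => v i ≤ s)).Nonempty
  then w ((Finset.univ.filter (fun i => v i ≤ s)).max' h) else 0

lemma pcv_of_empty {w v : Fin m → ℝ} {s : ℝ} (h : ∀ i, s < v i) : pcv w v s = 0 := by
  have hne : ¬ (Finset.univ.filter (fun i => v i ≤ s)).Nonempty := by
    rintro ⟨i, hi⟩
    rw [Finset.mem_filter] at hi
    exact absurd hi.2 (not_le.2 (h i))
  rw [pcv, dif_neg hne]

lemma pcv_eq {w v : Fin m → ℝ} {s : ℝ} (i : Fin m) (h1 : v i ≤ s)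
    (h2 : ∀ j, i < j → s < v j) : pcv w v s = w i := by
  have hne : (Finset.univ.filter (fun j => v j ≤ s)).Nonempty :=
    ⟨i, Finset.mem_filter.2 ⟨Finset.mem_univ _, h1⟩⟩
  rw [pcv, dif_pos hne]
  congr 1
  apply le_antisymm
  · apply Finset.max'_le
    intro j hj
    rw [Finset.mem_filter] at hj
    by_contra hji
    exact absurd hj.2 (not_le.2 (h2 j (lt_of_not_ge hji)))
  · exact Finset.le_max' _ i (Finset.mem_filter.2 ⟨Finset.mem_univ _, h1⟩)

lemma pcv_congr2 {w : Fin m → ℝ} {v v' : Fin m → ℝ} {s t : ℝ}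
    (h : ∀ j, v j ≤ s ↔ v' j ≤ t) : pcv w v s = pcv w v' t := by
  by_cases hne : (Finset.univ.filter (fun i => v i ≤ s)).Nonempty
  · set i₀ := (Finset.univ.filter (fun i => v i ≤ s)).max' hne with hi₀
    have hmem : v i₀ ≤ s := by
      have h' := Finset.max'_mem _ hne
      rw [Finset.mem_filter] at h'; exact h'.2
    have hmax : ∀ j, v j ≤ s → j ≤ i₀ := fun j hj =>
      Finset.le_max' _ j (Finset.mem_filter.2 ⟨Finset.mem_univ _, hj⟩)
    have e1 : pcv w v s = w i₀ :=
      pcv_eq i₀ hmem (fun j hij => not_le.1 fun hle => absurd (hmax j hle) (not_le.2 hij))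
    have e2 : pcv w v' t = w i₀ :=
      pcv_eq i₀ ((h i₀).1 hmem)
        (fun j hij => not_le.1 fun hle => absurd (hmax j ((h j).2 hle)) (not_le.2 hij))
    rw [e1, e2]
  · have h1 : ∀ i, s < v i := fun i =>
      not_le.1 fun hle => hne ⟨i, Finset.mem_filter.2 ⟨Finset.mem_univ _, hle⟩⟩
    rw [pcv_of_empty h1,
      pcv_of_empty (fun i => not_le.1 fun hle => not_le.2 (h1 i) ((h i).2 hle))]

lemma pcv_mem (w v : Fin m → ℝ) (s : ℝ) : pcv w v s = 0 ∨ ∃ i, pcv w v s = w i := by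
  rw [pcv]; split
  · exact Or.inr ⟨_, rfl⟩
  · exact Or.inl rfl

lemma pcv_self_le {v : Fin m → ℝ} {s : ℝ} (h0 : 0 ≤ s) : pcv v v s ≤ s := by
  rw [pcv]; split
  · next h =>
    have h' := Finset.max'_mem _ h
    rw [Finset.mem_filter] at h'; exact h'.2
  · exact h0

lemma pcv_self_max {v : Fin m → ℝ} (hv : Monotone v) {s : ℝ} {j : Fin m} (hj : v j ≤ s) :
    v j ≤ pcv v v s := by
  have hne : (Finset.univ.filter (fun i => v i ≤ s)).Nonempty :=
    ⟨j, Finset.mem_filter.2 ⟨Finset.mem_univ _, hj⟩⟩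
  rw [pcv, dif_pos hne]
  exact hv (Finset.le_max' _ j (Finset.mem_filter.2 ⟨Finset.mem_univ _, hj⟩))

lemma pcv_interval {v : Fin m → ℝ} (hv : Monotone v) (hpos : ∀ i, 0 < v i)
    {s : ℝ} (h0 : 0 ≤ s) (h1 : s < 1) :
    ∃ c t : ℝ, 0 ≤ c ∧ c ≤ s ∧ s < t ∧ (0 < s → s ∉ Set.range v → c < s) ∧
      ∀ u, c ≤ u → u < t → ∀ j, v j ≤ u ↔ v j ≤ s := by
  obtain ⟨t, hst, ht⟩ : ∃ t, s < t ∧ ∀ j, s < v j → t ≤ v j := by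
    by_cases hF : (Finset.univ.filter (fun i => s < v i)).Nonempty
    · refine ⟨v ((Finset.univ.filter (fun i => s < v i)).min' hF), ?_, ?_⟩
      · have h' := Finset.min'_mem _ hF
        rw [Finset.mem_filter] at h'; exact h'.2
      · intro j hj
        exact hv (Finset.min'_le _ j (Finset.mem_filter.2 ⟨Finset.mem_univ _, hj⟩))
    · exact ⟨1, h1, fun j hj =>
        absurd ⟨j, Finset.mem_filter.2 ⟨Finset.mem_univ _, hj⟩⟩ hF⟩
  by_cases hG : (Finset.univ.filter (fun i => v i ≤ s)).Nonempty
  · set i₀ := (Finset.univ.filter (fun i => v i ≤ s)).max' hG with hi₀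
    have hmem : v i₀ ≤ s := by
      have h' := Finset.max'_mem _ hG
      rw [Finset.mem_filter] at h'; exact h'.2
    have hmax : ∀ j, v j ≤ s → v j ≤ v i₀ := fun j hj =>
      hv (Finset.le_max' _ j (Finset.mem_filter.2 ⟨Finset.mem_univ _, hj⟩))
    refine ⟨v i₀, t, (hpos i₀).le, hmem, hst, ?_, ?_⟩
    · intro _ hr
      exact lt_of_le_of_ne hmem (fun h => hr ⟨i₀, h⟩)
    · intro u hcu hut j
      constructor
      · intro hju
        by_contra hjs
        exact absurd hju (not_le.2 (lt_of_lt_of_le hut (ht j (not_le.1 hjs))))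
      · intro hjs; exact le_trans (hmax j hjs) hcu
  · refine ⟨0, t, le_refl 0, h0, hst, fun hs _ => hs, ?_⟩
    intro u hcu hut j
    have hjs : ¬ v j ≤ s := fun h =>
      hG ⟨j, Finset.mem_filter.2 ⟨Finset.mem_univ _, h⟩⟩
    constructor
    · intro hju
      exact absurd hju (not_le.2 (lt_of_lt_of_le hut (ht j (not_le.1 hjs))))
    · intro h; exact absurd h hjs

/-- the value just to the left of `v i`. -/
noncomputable def lval (w : Fin m → ℝ) (i : Fin m) : ℝ :=
  if h : 0 < i.val then w ⟨i.val - 1, Nat.lt_of_le_of_lt (Nat.sub_le _ _) i.isLt⟩ else 0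

lemma pcv_left {v : Fin m → ℝ} (hv : StrictMono v) (hpos : ∀ j, 0 < v j) (i : Fin m) :
    0 ≤ lval v i ∧ lval v i < v i ∧
      ∀ (w : Fin m → ℝ) (u : ℝ), lval v i ≤ u → u < v i → pcv w v u = lval w i := by
  by_cases hi : 0 < i.val
  · have hlt : (⟨i.val - 1, Nat.lt_of_le_of_lt (Nat.sub_le _ _) i.isLt⟩ : Fin m) < i := by
      rw [Fin.lt_def]; simp only []; omega
    refine ⟨?_, ?_, ?_⟩
    · rw [lval, dif_pos hi]; exact (hpos _).le
    · rw [lval, dif_pos hi]; exact hv hlt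
    · intro w u hLu huv
      rw [lval, dif_pos hi] at hLu
      rw [lval, dif_pos hi]
      refine pcv_eq _ hLu ?_
      intro j hj
      have hij : i ≤ j := by
        rw [Fin.lt_def] at hj
        rw [Fin.le_def]
        simp only [] at hj
        omega
      exact lt_of_lt_of_le huv (hv.monotone hij)
  · refine ⟨?_, ?_, ?_⟩
    · rw [lval, dif_neg hi]
    · rw [lval, dif_neg hi]; exact hpos i
    · intro w u hLu huv
      rw [lval, dif_neg hi]
      apply pcv_of_empty
      intro j
      have hij : i ≤ j := by rw [Fin.le_def]; omega
      exact lt_of_lt_of_le huv (hv.monotone hij)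

end pcv

/-- rational-breakpoint states are dense: for `0 < α < d₀(x)/3` there
is a state `y` with the same number of breakpoints, all rational, with `d(y,x) < α`. -/
theorem rational_breakpoint_approx (N : ℕ) (x : Set (Lin N)) (hx : IsState N x)
    (α : ℝ) (hα : 0 < α) (hα3 : α < d0 N x / 3) :
    ∃ y : Set (Lin N), IsState N y ∧ nBp N y = nBp N x ∧
      (∀ s ∈ Bp N y, ∃ q : ℚ, (q : ℝ) = s) ∧ dE N y x < α := by
  classical
  obtain ⟨hxfin, hxmem, hxne, hxpart⟩ := hx
  have hD : (Bp N x).Finite := by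
    apply Set.Finite.subset (Set.Finite.biUnion hxfin fun f hf => (hxmem f hf).2.1)
    rintro s ⟨hs, f, hf, hc⟩
    exact Set.mem_biUnion hf ⟨hs, hc⟩
  set m := nBp N x with hm
  have hcard : hD.toFinset.card = m := by
    rw [hm, nBp, Set.ncard_eq_toFinset_card _ hD]
  set e := hD.toFinset.orderIsoOfFin hcard with he
  set a : Fin m → ℝ := fun i => (e i : ℝ) with ha
  have haD : ∀ i, a i ∈ Bp N x := fun i => hD.mem_toFinset.1 (e i).2
  have haS : StrictMono a := fun i j hij => Subtype.coe_lt_coe.2 (e.strictMono hij)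
  have hsurj : ∀ s ∈ Bp N x, ∃ i, a i = s := by
    intro s hs
    obtain ⟨i, hi⟩ := e.surjective ⟨s, hD.mem_toFinset.2 hs⟩
    refine ⟨i, ?_⟩
    show ((e i : ℝ)) = s
    rw [hi]
  have haI : ∀ i, a i ∈ Set.Ioo (0:ℝ) 1 := fun i => (haD i).1
  have hapos : ∀ i, 0 < a i := fun i => (haI i).1
  have hd0le : ∀ u ∈ insert (0:ℝ) (insert 1 (Bp N x)),
      ∀ v' ∈ insert (0:ℝ) (insert 1 (Bp N x)), u < v' → d0 N x ≤ v' - u := by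
    intro u hu v' hv' huv
    apply csInf_le
    · refine ⟨0, ?_⟩
      rintro t ⟨u', _, v'', _, h1, rfl⟩
      linarith
    · exact ⟨u, hu, v', hv', huv, rfl⟩
  have h3a : 3 * α < d0 N x := by linarith
  have haP : ∀ i, a i ∈ insert (0:ℝ) (insert 1 (Bp N x)) := fun i =>
    Set.mem_insert_iff.2 (Or.inr (Set.mem_insert_iff.2 (Or.inr (haD i))))
  have h0P : (0:ℝ) ∈ insert (0:ℝ) (insert 1 (Bp N x)) := Set.mem_insert _ _
  have h1P : (1:ℝ) ∈ insert (0:ℝ) (insert 1 (Bp N x)) :=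
    Set.mem_insert_iff.2 (Or.inr (Set.mem_insert _ _))
  have hgap : ∀ i j, i < j → a i + 3*α < a j := by
    intro i j hij
    have := hd0le (a i) (haP i) (a j) (haP j) (haS hij)
    linarith
  have ha1α : ∀ i, a i + 3*α < 1 := by
    intro i
    have := hd0le (a i) (haP i) 1 h1P (haI i).2
    linarith
  set δ := α / (m + 1) with hδdef
  have hδpos : 0 < δ := by positivity
  have hδα : δ ≤ α := div_le_self hα.le (by exact_mod_cast Nat.le_add_left 1 m)
  have hqex : ∀ i : Fin m, ∃ r : ℚ, a i < (r:ℝ) ∧ (r:ℝ) < a i + δ := fun i =>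
    exists_rat_btwn (by linarith)
  choose r hr1 hr2 using hqex
  set q : Fin m → ℝ := fun i => (r i : ℝ) with hqdef
  have haq : ∀ i, a i < q i := hr1
  have haqδ : ∀ i, q i < a i + δ := hr2
  have hqS : StrictMono q := by
    intro i j hij
    have h2 := hgap i j hij
    have := haqδ i
    have := haq j
    linarith [hδα]
  have hqpos : ∀ i, 0 < q i := fun i => lt_trans (hapos i) (haq i)
  have hq1 : ∀ i, q i < 1 := fun i => by linarith [haqδ i, ha1α i, hδα, hα]
  set σ : ℝ → ℝ := fun s => pcv a q s with hσ
  set σ' : ℝ → ℝ := fun s => pcv a a s with hσ'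
  have hσs : ∀ s, σ s = pcv a q s := fun _ => rfl
  have hσ's : ∀ s, σ' s = pcv a a s := fun _ => rfl
  set Φ : Lin N → Lin N :=
    fun f s => if s ∈ Set.Ico (0:ℝ) 1 then f (σ s) else ∅ with hΦ
  have hΦval : ∀ (f : Lin N) (s : ℝ), 0 ≤ s → s < 1 → Φ f s = f (σ s) := by
    intro f s h0 h1
    simp only [hΦ]
    rw [if_pos (Set.mem_Ico.mpr ⟨h0, h1⟩)]
  have hΦout : ∀ (f : Lin N), ∀ s ∉ Set.Ico (0:ℝ) 1, Φ f s = ∅ := by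
    intro f s hs
    simp only [hΦ]
    rw [if_neg hs]
  have hσq : ∀ i, σ (q i) = a i := fun i =>
    pcv_eq i le_rfl (fun j hj => hqS hj)
  have hσ'a : ∀ i, σ' (a i) = a i := fun i =>
    pcv_eq i le_rfl (fun j hj => haS hj)
  have hσ0 : σ 0 = 0 := pcv_of_empty (fun i => hqpos i)
  have hσ'mem : ∀ s : ℝ, 0 ≤ s → σ' s ∈ Set.Ico (0:ℝ) 1 := by
    intro s h0
    rcases pcv_mem a a s with h | ⟨i, h⟩
    · rw [hσ's s, h]; exact ⟨le_refl 0, one_pos⟩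
    · rw [hσ's s, h]; exact ⟨(hapos i).le, (haI i).2⟩
  have hσmem : ∀ s : ℝ, σ s ∈ Set.Ico (0:ℝ) 1 := by
    intro s
    rcases pcv_mem a q s with h | ⟨i, h⟩
    · rw [hσs s, h]; exact ⟨le_refl 0, one_pos⟩
    · rw [hσs s, h]; exact ⟨(hapos i).le, (haI i).2⟩
  have hfσ' : ∀ f ∈ x, ∀ s : ℝ, 0 ≤ s → s < 1 → f s = f (σ' s) := by
    intro f hf s h0 h1
    have hc0 : 0 ≤ σ' s := (hσ'mem s h0).1
    have hcs : σ' s ≤ s := pcv_self_le h0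
    apply const_between N f (hxmem f hf).1 hc0 hcs h1
    intro u hu1 hu2
    by_contra hcont
    have huBp : u ∈ Bp N x :=
      ⟨⟨lt_of_le_of_lt hc0 hu1, lt_of_le_of_lt hu2 h1⟩, f, hf, hcont⟩
    obtain ⟨j, hj⟩ := hsurj u huBp
    have hjs : a j ≤ s := by rw [hj]; exact hu2
    have h2 : a j ≤ σ' s := pcv_self_max haS.monotone hjs
    have h3 : σ' s < a j := by rw [hj]; exact hu1
    exact absurd h2 (not_le.2 h3)
  have hΦrc : ∀ (f : Lin N), ∀ s ∈ Set.Ico (0:ℝ) 1, RightConstAt N (Φ f) s := by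
    intro f s hs
    obtain ⟨c, t, hc0, hcs, hst, _, hint⟩ := pcv_interval hqS.monotone hqpos hs.1 hs.2
    refine ⟨min (t - s) (1 - s), lt_min (by linarith) (by linarith [hs.2]), ?_⟩
    intro u hu
    have hu2 : u < t := by
      have := hu.2; have := min_le_left (t - s) (1 - s); linarith
    have hu3 : u < 1 := by
      have := hu.2; have := min_le_right (t - s) (1 - s); linarith
    rw [hΦval f u (le_trans hs.1 hu.1) hu3, hΦval f s hs.1 hs.2]
    exact congrArg f (pcv_congr2 (fun j => hint u (le_trans hcs hu.1) hu2 j))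
  have hΦcont : ∀ (f : Lin N), ∀ s ∈ Set.Ioo (0:ℝ) 1, s ∉ Set.range q →
      ContAt N (Φ f) s := by
    intro f s hs hsr
    obtain ⟨c, t, hc0, hcs, hst, hlt, hint⟩ :=
      pcv_interval hqS.monotone hqpos hs.1.le hs.2
    have hcls : c < s := hlt hs.1 hsr
    refine ⟨min (s - c) (min (t - s) (1 - s)),
      lt_min (by linarith) (lt_min (by linarith) (by linarith [hs.2])), ?_⟩
    intro u hu
    have hu1 : c < u := by
      have := hu.1; have := min_le_left (s - c) (min (t - s) (1 - s)); linarith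
    have hu2 : u < t := by
      have := hu.2
      have h' := le_trans (min_le_right (s - c) (min (t - s) (1 - s)))
        (min_le_left (t - s) (1 - s))
      linarith
    have hu3 : u < 1 := by
      have := hu.2
      have h' := le_trans (min_le_right (s - c) (min (t - s) (1 - s)))
        (min_le_right (t - s) (1 - s))
      linarith
    rw [hΦval f u (le_trans hc0 hu1.le) hu3, hΦval f s hs.1.le hs.2]
    exact congrArg f (pcv_congr2 (fun j => hint u hu1.le hu2 j))
  have hΦdisc : ∀ f ∈ x, ∀ i : Fin m, ¬ ContAt N f (a i) → ¬ ContAt N (Φ f) (q i) := by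
    intro f hf i hnc
    obtain ⟨hL0a, hLlta, hLvala⟩ := pcv_left haS hapos i
    obtain ⟨hL0q, hLltq, hLvalq⟩ := pcv_left hqS hqpos i
    have hkey : f (lval a i) ≠ f (a i) := by
      intro heq
      apply hnc
      obtain ⟨c, t, hc0, hcs, hst, _, hint⟩ :=
        pcv_interval haS.monotone hapos (hapos i).le (haI i).2
      refine ⟨min (a i - lval a i) (min (t - a i) (1 - a i)),
        lt_min (by linarith) (lt_min (by linarith) (by linarith [(haI i).2])), ?_⟩
      intro u hu
      have hu3 : u < 1 := by
        have := hu.2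
        have h' := le_trans (min_le_right (a i - lval a i) (min (t - a i) (1 - a i)))
          (min_le_right (t - a i) (1 - a i))
        linarith
      rcases lt_or_ge u (a i) with hua | hua
      · have huL : lval a i < u := by
          have := hu.1
          have h' := min_le_left (a i - lval a i) (min (t - a i) (1 - a i))
          linarith
        have hu0 : 0 ≤ u := le_trans hL0a huL.le
        calc f u = f (σ' u) := hfσ' f hf u hu0 hu3
          _ = f (lval a i) := by rw [hσ's u, hLvala a u huL.le hua]
          _ = f (a i) := heq
      · have hu2 : u < t := by
          have := hu.2
          have h' := le_trans (min_le_right (a i - lval a i) (min (t - a i) (1 - a i)))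
            (min_le_left (t - a i) (1 - a i))
          linarith
        calc f u = f (σ' u) := hfσ' f hf u (le_trans (hapos i).le hua) hu3
          _ = f (σ' (a i)) := by
              rw [hσ's u, hσ's (a i)]
              exact congrArg f (pcv_congr2 (fun j => hint u (le_trans hcs hua) hu2 j))
          _ = f (a i) := by rw [hσ'a i]
    rintro ⟨ε, hε, hco⟩
    set u := (max (lval q i) (q i - ε) + q i)/2 with hu
    have hmax_lt : max (lval q i) (q i - ε) < q i := max_lt hLltq (by linarith)
    have hu_lt : u < q i := by rw [hu]; linarith
    have hu_gt1 : lval q i ≤ u := by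
      have := le_max_left (lval q i) (q i - ε); rw [hu]; linarith
    have hu_gt2 : q i - ε < u := by
      have := le_max_right (lval q i) (q i - ε); rw [hu]; linarith
    have hu0 : 0 ≤ u := le_trans hL0q hu_gt1
    have e1 : Φ f u = f (lval a i) := by
      rw [hΦval f u hu0 (lt_trans hu_lt (hq1 i)), hσs u, hLvalq a u hu_gt1 hu_lt]
    have e2 : Φ f u = f (a i) := by
      have h' := hco u ⟨hu_gt2, by linarith⟩
      rw [h', hΦval f (q i) (hqpos i).le (hq1 i), hσq i]
    exact hkey (by rw [← e1, e2])
  have hΦmem : ∀ f ∈ x, MemS N (Φ f) := by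
    intro f hf
    refine ⟨hΦrc f, ?_, hΦout f⟩
    apply Set.Finite.subset (Set.finite_range q)
    rintro s ⟨hs, hc⟩
    by_contra hsr
    exact hc (hΦcont f s hs hsr)
  have hΦinj : Set.InjOn Φ x := by
    intro f hf g hg hfg
    funext s
    rcases Classical.em (s ∈ Set.Ico (0:ℝ) 1) with hs | hs
    · rw [hfσ' f hf s hs.1 hs.2, hfσ' g hg s hs.1 hs.2]
      rcases pcv_mem a a s with h | ⟨i, h⟩
      · rw [hσ's s, h]
        have e1 : f 0 = Φ f 0 := by rw [hΦval f 0 le_rfl one_pos, hσ0]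
        have e2 : g 0 = Φ g 0 := by rw [hΦval g 0 le_rfl one_pos, hσ0]
        rw [e1, e2, hfg]
      · rw [hσ's s, h]
        have e1 : f (a i) = Φ f (q i) := by
          rw [hΦval f (q i) (hqpos i).le (hq1 i), hσq i]
        have e2 : g (a i) = Φ g (q i) := by
          rw [hΦval g (q i) (hqpos i).le (hq1 i), hσq i]
        rw [e1, e2, hfg]
    · rw [(hxmem f hf).2.2 s hs, (hxmem g hg).2.2 s hs]
  have hyState : IsState N (Φ '' x) := by
    refine ⟨hxfin.image Φ, ?_, ?_, ?_⟩
    · rintro h ⟨f, hf, rfl⟩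
      exact hΦmem f hf
    · rintro h ⟨f, hf, rfl⟩
      obtain ⟨s₀, hs₀, hfne⟩ := hxne f hf
      rcases pcv_mem a a s₀ with h' | ⟨i, h'⟩
      · refine ⟨0, ⟨le_rfl, one_pos⟩, ?_⟩
        rw [hΦval f 0 le_rfl one_pos, hσ0]
        rw [hfσ' f hf s₀ hs₀.1 hs₀.2, hσ's s₀, h'] at hfne
        exact hfne
      · refine ⟨q i, ⟨(hqpos i).le, hq1 i⟩, ?_⟩
        rw [hΦval f (q i) (hqpos i).le (hq1 i), hσq i]
        rw [hfσ' f hf s₀ hs₀.1 hs₀.2, hσ's s₀, h'] at hfne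
        exact hfne
    · intro s hs
      constructor
      · intro n
        obtain ⟨f, hf, hn⟩ := (hxpart (σ s) (hσmem s)).1 n
        refine ⟨Φ f, ⟨f, hf, rfl⟩, ?_⟩
        rw [hΦval f s hs.1 hs.2]
        exact hn
      · rintro _ ⟨f, hf, rfl⟩ _ ⟨g, hg, rfl⟩ hne
        have hfg : f ≠ g := fun h => hne (by rw [h])
        rw [hΦval f s hs.1 hs.2, hΦval g s hs.1 hs.2]
        exact (hxpart (σ s) (hσmem s)).2 f hf g hg hfg
  have hBpy : Bp N (Φ '' x) = Set.range q := by
    apply Set.eq_of_subset_of_subset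
    · rintro s ⟨hs, h, ⟨f, hf, rfl⟩, hc⟩
      by_contra hsr
      exact hc (hΦcont f s hs hsr)
    · rintro s ⟨i, rfl⟩
      obtain ⟨_, f, hf, hnc⟩ := haD i
      exact ⟨⟨hqpos i, hq1 i⟩, Φ f, ⟨f, hf, rfl⟩, hΦdisc f hf i hnc⟩
  have hnBpy : nBp N (Φ '' x) = m := by
    rw [nBp, hBpy, ← Set.image_univ, Set.ncard_image_of_injective _ hqS.injective,
      Set.ncard_univ, Nat.card_eq_fintype_card, Fintype.card_fin]
  have hncard : (Φ '' x).ncard = x.ncard := Set.ncard_image_of_injOn hΦinj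
  have hdLb : ∀ f ∈ x, dL N (Φ f) f ≤ (m:ℝ) * δ := by
    intro f hf
    have hIntone : ∀ i : Fin m, MeasureTheory.Integrable
        ((Set.Ico (a i) (q i)).indicator (fun _ => (1:ℝ)))
        (MeasureTheory.volume.restrict (Set.Ioo (0:ℝ) 1)) := by
      intro i
      apply MeasureTheory.Integrable.integrableOn
      rw [MeasureTheory.integrable_indicator_iff measurableSet_Ico]
      exact MeasureTheory.integrableOn_const (ne_of_lt measure_Ico_lt_top)
    have hind : ∀ s ∈ Set.Ioo (0:ℝ) 1, dp N (Φ f s) (f s) ≤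
        ∑ i : Fin m, (Set.Ico (a i) (q i)).indicator (fun _ => (1:ℝ)) s := by
      intro s hs
      by_cases hU : ∃ i, s ∈ Set.Ico (a i) (q i)
      · obtain ⟨i, hi⟩ := hU
        calc dp N (Φ f s) (f s) ≤ 1 := dp_le_one N _ _
          _ = (Set.Ico (a i) (q i)).indicator (fun _ => (1:ℝ)) s :=
            (Set.indicator_of_mem hi (fun _ => (1:ℝ))).symm
          _ ≤ _ := Finset.single_le_sum
              (f := fun j => (Set.Ico (a j) (q j)).indicator (fun _ => (1:ℝ)) s)
              (fun j _ => Set.indicator_nonneg (fun _ _ => zero_le_one) s)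
              (Finset.mem_univ i)
      · push_neg at hU
        have hσσ : σ s = σ' s := by
          rw [hσs s, hσ's s]
          apply pcv_congr2
          intro j
          constructor
          · intro h'; exact le_trans (haq j).le h'
          · intro h'
            by_contra h''
            exact hU j ⟨h', not_le.1 h''⟩
        have heq : Φ f s = f s := by
          rw [hΦval f s hs.1.le hs.2, hσσ, ← hfσ' f hf s hs.1.le hs.2]
        rw [heq, dp, if_pos rfl]
        exact Finset.sum_nonneg fun j _ =>
          Set.indicator_nonneg (fun _ _ => zero_le_one) s
    calc dL N (Φ f) f ≤ ∫ s in Set.Ioo (0:ℝ) 1,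
          ∑ i : Fin m, (Set.Ico (a i) (q i)).indicator (fun _ => (1:ℝ)) s := by
          apply MeasureTheory.integral_mono_of_nonneg
          · exact Filter.Eventually.of_forall fun s => dp_nonneg N _ _
          · exact MeasureTheory.integrable_finset_sum _ (fun i _ => hIntone i)
          · exact (MeasureTheory.ae_restrict_iff' measurableSet_Ioo).2
              (Filter.Eventually.of_forall hind)
      _ = ∑ i : Fin m, ∫ s in Set.Ioo (0:ℝ) 1,
            (Set.Ico (a i) (q i)).indicator (fun _ => (1:ℝ)) s :=
          MeasureTheory.integral_finset_sum _ (fun i _ => hIntone i)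
      _ ≤ ∑ _i : Fin m, δ := by
          apply Finset.sum_le_sum
          intro i _
          rw [MeasureTheory.setIntegral_indicator measurableSet_Ico,
            MeasureTheory.setIntegral_const, smul_eq_mul, mul_one]
          calc (MeasureTheory.volume (Set.Ioo (0:ℝ) 1 ∩ Set.Ico (a i) (q i))).toReal
              ≤ (MeasureTheory.volume (Set.Ico (a i) (q i))).toReal := by
                apply ENNReal.toReal_mono (ne_of_lt measure_Ico_lt_top)
                exact measure_mono Set.inter_subset_right
            _ = q i - a i := by
                rw [Real.volume_Ico, ENNReal.toReal_ofReal (by linarith [haq i])]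
            _ ≤ δ := by linarith [haqδ i]
      _ = (m:ℝ) * δ := by
          rw [Finset.sum_const, Finset.card_univ, Fintype.card_fin, nsmul_eq_mul]
  have hbdd0 : ∀ (g : Lin N) (S : Set (Lin N)), BddBelow (dL N g '' S) := by
    intro g S
    refine ⟨0, ?_⟩
    rintro z ⟨h, _, rfl⟩
    exact dL_nonneg N _ _
  have hmδ : (m:ℝ) * δ < α := by
    have h1 : (0:ℝ) < (m:ℝ) + 1 := by positivity
    calc (m:ℝ) * δ = α * ((m:ℝ) / ((m:ℝ)+1)) := by rw [hδdef]; ring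
      _ < α * 1 := by
          apply mul_lt_mul_of_pos_left _ hα
          rw [div_lt_one h1]
          linarith
      _ = α := mul_one α
  have hS1 : sSup ((fun h => dLset N h x) '' (Φ '' x)) ≤ (m:ℝ) * δ := by
    apply Real.sSup_le
    · rintro z ⟨h, hh, rfl⟩
      obtain ⟨f, hf, rfl⟩ := hh
      exact le_trans (csInf_le (hbdd0 _ _) ⟨f, hf, rfl⟩) (hdLb f hf)
    · positivity
  have hS2 : sSup ((fun h => dLset N h (Φ '' x)) '' x) ≤ (m:ℝ) * δ := by
    apply Real.sSup_le
    · rintro z ⟨f, hf, rfl⟩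
      refine le_trans (csInf_le (hbdd0 _ _) ⟨Φ f, ⟨f, hf, rfl⟩, rfl⟩) ?_
      rw [dL_comm]
      exact hdLb f hf
    · positivity
  refine ⟨Φ '' x, hyState, by rw [hnBpy, hm], ?_, ?_⟩
  · intro s hs
    rw [hBpy] at hs
    obtain ⟨i, rfl⟩ := hs
    exact ⟨r i, rfl⟩
  · rw [dE, hncard, hnBpy, hm]
    simp only [sub_self, abs_zero, add_zero]
    exact lt_of_le_of_lt (max_le hS1 hS2) hmδ
end CWR
end

section
/- Let g be an element of the ARG space G, i.e., a right-continuous piecewise-constant E-valued function on [0,∞) with finitely many jumps, starting at the initial state ϖ, each jump being a coalescence or recombination of the previous state, and no breakpoint value repeated. Then for each time t, the projected ancestral material 𝔖(g(t)) is a finite subset of 𝒫^{m+1} (m = number of breakpoints of g) such that for each coordinate 0 ≤ i ≤ m, the nonempty i-th coordinates {π_i(z⃗) : z⃗ ∈ 𝔖(g(t)), π_i(z⃗) ≠ ∅} form a partition of {1,...,N}, and no vector in 𝔖(g(t)) is the null vector. -/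
open Set MeasureTheory

namespace CWR

/-! ### Auxiliary lemmas -/

/-- A function that is right-constant at `a` and continuous on `(a,b]` is constant on `[a,b]`. -/
lemma const_of_contAt (N : ℕ) (f : Lin N) (a b : ℝ) (hab : a ≤ b)
    (hra : RightConstAt N f a) (hc : ∀ u, a < u → u ≤ b → ContAt N f u) :
    f b = f a := by
  set A : Set ℝ := {u | u ∈ Set.Icc a b ∧ ∀ w, a ≤ w → w ≤ u → f w = f a} with hA
  have haA : a ∈ A := ⟨⟨le_refl a, hab⟩, fun w hw1 hw2 => by
    have : w = a := le_antisymm hw2 hw1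
    rw [this]⟩
  have hbdd : BddAbove A := ⟨b, fun u hu => hu.1.2⟩
  set c := sSup A with hc'
  have hac : a ≤ c := le_csSup hbdd haA
  have hcb : c ≤ b := csSup_le ⟨a, haA⟩ (fun u hu => hu.1.2)
  have key : ∀ w, a ≤ w → w < c → f w = f a := by
    intro w hw hwc
    obtain ⟨u, huA, hwu⟩ := exists_lt_of_lt_csSup ⟨a, haA⟩ hwc
    exact huA.2 w hw hwu.le
  have hfc : f c = f a := by
    rcases eq_or_lt_of_le hac with h | h
    · rw [← h]
    · obtain ⟨ε, hε, hconst⟩ := hc c h hcb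
      set w := max a (c - ε/2) with hw
      have hwa : a ≤ w := le_max_left _ _
      have hwc : w < c := max_lt h (by linarith)
      have hw1 : c - ε < w := lt_of_lt_of_le (by linarith) (le_max_right _ _)
      have hw2 : w < c + ε := by linarith
      have h1 : f w = f c := hconst w ⟨hw1, hw2⟩
      have h2 : f w = f a := key w hwa hwc
      rw [← h1, h2]
  have hcb' : c = b := by
    by_contra hne
    have hclt : c < b := lt_of_le_of_ne hcb hne
    rcases eq_or_lt_of_le hac with h | h
    · obtain ⟨ε, hε, hconst⟩ := hra
      set u := min b (a + ε/2) with hu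
      have hau : a < u := lt_min (h ▸ hclt) (by linarith)
      have huA : u ∈ A := by
        refine ⟨⟨hau.le, min_le_left _ _⟩, fun w hw1 hw2 => ?_⟩
        exact hconst w ⟨hw1, lt_of_le_of_lt (le_trans hw2 (min_le_right _ _)) (by linarith)⟩
      have := le_csSup hbdd huA
      rw [← hc'] at this
      rw [← h] at this
      linarith
    · obtain ⟨ε, hε, hconst⟩ := hc c h hcb
      set u := min b (c + ε/2) with hu
      have hcu : c < u := lt_min hclt (by linarith)
      have huA : u ∈ A := by
        refine ⟨⟨le_trans hac hcu.le, min_le_left _ _⟩, fun w hw1 hw2 => ?_⟩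
        rcases le_or_gt w c with hwle | hwgt
        · rcases eq_or_lt_of_le hwle with he | hl
          · rw [he]; exact hfc
          · exact key w hw1 hl
        · have : f w = f c :=
            hconst w ⟨by linarith, lt_of_le_of_lt (le_trans hw2 (min_le_right _ _)) (by linarith)⟩
          rw [this, hfc]
      have := le_csSup hbdd huA
      rw [← hc'] at this
      linarith
  rw [← hcb', hfc]

lemma startOf_nonneg (N : ℕ) (f : Lin N) : 0 ≤ startOf N f :=
  Real.sInf_nonneg (fun s hs => hs.1.1)

/-- If the support of `f` is nonempty, then `f` is nonempty at its left endpoint. -/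
lemma f_startOf_ne (N : ℕ) (f : Lin N) (hf : MemS N f)
    (hne : ∃ s, s ∈ Set.Ico (0:ℝ) 1 ∧ f s ≠ ∅) : startOf N f ∈ Set.Ico (0:ℝ) 1 ∧ f (startOf N f) ≠ ∅ := by
  obtain ⟨s₀, hs₀, hfs₀⟩ := hne
  have hbdd : BddBelow {s | s ∈ Set.Ico (0:ℝ) 1 ∧ f s ≠ ∅} := ⟨0, fun s hs => hs.1.1⟩
  have hsne : {s | s ∈ Set.Ico (0:ℝ) 1 ∧ f s ≠ ∅}.Nonempty := ⟨s₀, hs₀, hfs₀⟩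
  have h0 : 0 ≤ startOf N f := startOf_nonneg N f
  have h1 : startOf N f ≤ s₀ := csInf_le hbdd ⟨hs₀, hfs₀⟩
  have hIco : startOf N f ∈ Set.Ico (0:ℝ) 1 := ⟨h0, lt_of_le_of_lt h1 hs₀.2⟩
  obtain ⟨ε, hε, hconst⟩ := hf.1 _ hIco
  have : startOf N f < startOf N f + ε := by linarith
  obtain ⟨w, hw, hw2⟩ := exists_lt_of_csInf_lt hsne this
  have hw3 : startOf N f ≤ w := csInf_le hbdd hw
  have : f w = f (startOf N f) := hconst w ⟨hw3, hw2⟩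
  exact ⟨hIco, this ▸ hw.2⟩

lemma bOf_nonneg (N : ℕ) (x : Set (Lin N)) (f : Lin N) : 0 ≤ bOf N x f := by
  unfold bOf
  split
  · exact Real.sInf_nonneg (fun s hs => hs.1.1)
  · exact startOf_nonneg N f

/-- Helper A: a lineage is nonempty somewhere strictly below a valid breakpoint. -/
lemma nonempty_below (N : ℕ) (hN : 0 < N) (x : Set (Lin N)) (hx : IsState N x)
    (f : Lin N) (hf : f ∈ x) (u : ℝ) (hu : bOf N x f < u) :
    ∃ s, s ∈ Set.Ico (0:ℝ) 1 ∧ s < u ∧ f s ≠ ∅ := by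
  have hu0 : 0 < u := lt_of_le_of_lt (bOf_nonneg N x f) hu
  by_cases hfirst : isFirst N x f
  · -- f is the first lineage, its support starts at 0
    have h0mem : (0:ℝ) ∈ Set.Ico (0:ℝ) 1 := ⟨le_refl 0, by norm_num⟩
    obtain ⟨h, hhx, hnh⟩ := (hx.2.2.2 0 h0mem).1 ⟨0, hN⟩
    have hh0 : h 0 ≠ ∅ := fun he => by simp [he] at hnh
    have hsth : startOf N h = 0 := by
      refine le_antisymm (csInf_le ⟨0, fun s hs => hs.1.1⟩ ⟨h0mem, hh0⟩) (startOf_nonneg N h)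
    have hstf : startOf N f = 0 := by
      rcases hfirst h hhx with he | hlt
      · rw [he, hsth]
      · rcases hlt with h1 | h1
        · exact absurd (lt_of_lt_of_le (hsth ▸ h1) (startOf_nonneg N f)).false
            (by intro hh; exact hh)
        · rw [h1.1, hsth]
      
    obtain ⟨hIco, hne⟩ := f_startOf_ne N f (hx.2.1 f hf) (hx.2.2.1 f hf)
    exact ⟨startOf N f, hIco, hstf ▸ hu0, hne⟩
  · have hb : bOf N x f = startOf N f := by unfold bOf; rw [if_neg hfirst]
    obtain ⟨hIco, hne⟩ := f_startOf_ne N f (hx.2.1 f hf) (hx.2.2.1 f hf)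
    exact ⟨startOf N f, hIco, hb ▸ hu, hne⟩

/-- Helper B: a lineage is nonempty somewhere strictly above `u` if `u < eOf`. -/
lemma nonempty_above (N : ℕ) (x : Set (Lin N)) (hx : IsState N x)
    (f : Lin N) (hf : f ∈ x) (u : ℝ) (hu : u < eOf N f) :
    ∃ s, u < s ∧ s < 1 ∧ f s ≠ ∅ := by
  by_contra hcon
  push_neg at hcon
  obtain ⟨s₀, hs₀, hfs₀⟩ := hx.2.2.1 f hf
  have hbdd : BddBelow {u : ℝ | ∀ s, u < s → s < 1 → f s = ∅} := by
    refine ⟨s₀, fun v hv => ?_⟩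
    by_contra hvs
    push_neg at hvs
    exact hfs₀ (hv s₀ hvs hs₀.2)
  have hmem : u ∈ {u : ℝ | ∀ s, u < s → s < 1 → f s = ∅} := fun s hs1 hs2 => by
    by_contra hne
    exact hne (hcon s hs1 hs2)
  have h1 : sInf {u : ℝ | ∀ s, u < s → s < 1 → f s = ∅} ≤ u := csInf_le hbdd hmem
  have h2 : eOf N f ≤ u := le_trans (min_le_left _ _) h1
  linarith

lemma memS_join (N : ℕ) (f h : Lin N) (hf : MemS N f) (hh : MemS N h) :
    MemS N (join N f h) := by
  refine ⟨?_, ?_, ?_⟩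
  · intro s hs
    obtain ⟨ε1, hε1, hc1⟩ := hf.1 s hs
    obtain ⟨ε2, hε2, hc2⟩ := hh.1 s hs
    refine ⟨min ε1 ε2, lt_min hε1 hε2, fun u hu => ?_⟩
    have h1 : u ∈ Set.Ico s (s + ε1) := ⟨hu.1, lt_of_lt_of_le hu.2 (by
      have := min_le_left ε1 ε2; linarith)⟩
    have h2 : u ∈ Set.Ico s (s + ε2) := ⟨hu.1, lt_of_lt_of_le hu.2 (by
      have := min_le_right ε1 ε2; linarith)⟩
    show f u ∪ h u = f s ∪ h s
    rw [hc1 u h1, hc2 u h2]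
  · refine Set.Finite.subset (Set.Finite.union hf.2.1 hh.2.1) ?_
    intro s hs
    by_contra hnot
    simp only [Set.mem_union, Set.mem_setOf_eq, not_or, not_and, not_not] at hnot
    obtain ⟨ε1, hε1, hc1⟩ := hnot.1 hs.1
    obtain ⟨ε2, hε2, hc2⟩ := hnot.2 hs.1
    refine hs.2 ⟨min ε1 ε2, lt_min hε1 hε2, fun u hu => ?_⟩
    have h1 : u ∈ Set.Ioo (s - ε1) (s + ε1) := ⟨lt_of_le_of_lt (by
        have := min_le_left ε1 ε2; linarith) hu.1,
      lt_of_lt_of_le hu.2 (by have := min_le_left ε1 ε2; linarith)⟩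
    have h2 : u ∈ Set.Ioo (s - ε2) (s + ε2) := ⟨lt_of_le_of_lt (by
        have := min_le_right ε1 ε2; linarith) hu.1,
      lt_of_lt_of_le hu.2 (by have := min_le_right ε1 ε2; linarith)⟩
    show f u ∪ h u = f s ∪ h s
    rw [hc1 u h1, hc2 u h2]
  · intro s hs
    show f s ∪ h s = ∅
    rw [hf.2.2 s hs, hh.2.2 s hs]
    simp


lemma memS_truncL (N : ℕ) (f : Lin N) (u : ℝ) (hf : MemS N f) :
    MemS N (truncL N f u) := by
  refine ⟨?_, ?_, ?_⟩
  · intro s hs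
    by_cases hsu : s < u
    · obtain ⟨ε1, hε1, hc1⟩ := hf.1 s hs
      refine ⟨min ε1 (u - s), lt_min hε1 (by linarith), fun w hw => ?_⟩
      have hw2 : w < s + ε1 := lt_of_lt_of_le hw.2 (by have := min_le_left ε1 (u-s); linarith)
      have hwu : w < u := lt_of_lt_of_le hw.2 (by have := min_le_right ε1 (u-s); linarith)
      show truncL N f u w = truncL N f u s
      unfold truncL
      rw [if_pos hwu, if_pos hsu]
      exact hc1 w ⟨hw.1, hw2⟩
    · refine ⟨1, one_pos, fun w hw => ?_⟩
      have hwu : ¬ w < u := fun hc => hsu (lt_of_le_of_lt hw.1 hc)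
      show truncL N f u w = truncL N f u s
      unfold truncL
      rw [if_neg hwu, if_neg hsu]
  · refine Set.Finite.subset (Set.Finite.union hf.2.1 (Set.finite_singleton u)) ?_
    intro s hs
    by_contra hnot
    simp only [Set.mem_union, Set.mem_setOf_eq, Set.mem_singleton_iff, not_or, not_and,
      not_not] at hnot
    have hsu : s ≠ u := hnot.2
    refine hs.2 ?_
    rcases lt_or_gt_of_ne hsu with hlt | hgt
    · obtain ⟨ε1, hε1, hc1⟩ := hnot.1 hs.1
      refine ⟨min ε1 (u - s), lt_min hε1 (by linarith), fun w hw => ?_⟩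
      have hwu : w < u := lt_of_lt_of_le hw.2 (by have := min_le_right ε1 (u-s); linarith)
      have hw1 : s - ε1 < w := lt_of_le_of_lt (by have := min_le_left ε1 (u-s); linarith) hw.1
      have hw2 : w < s + ε1 := lt_of_lt_of_le hw.2 (by have := min_le_left ε1 (u-s); linarith)
      show truncL N f u w = truncL N f u s
      unfold truncL
      rw [if_pos hwu, if_pos hlt]
      exact hc1 w ⟨hw1, hw2⟩
    · refine ⟨s - u, by linarith, fun w hw => ?_⟩
      have hwu : ¬ w < u := fun hc => by
        have : s - (s - u) < w := hw.1
        linarith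
      have hsu' : ¬ s < u := not_lt.2 hgt.le
      show truncL N f u w = truncL N f u s
      unfold truncL
      rw [if_neg hwu, if_neg hsu']
  · intro s hs
    show (if s < u then f s else ∅) = ∅
    split
    · exact hf.2.2 s hs
    · rfl

lemma memS_truncR (N : ℕ) (f : Lin N) (u : ℝ) (hf : MemS N f) :
    MemS N (truncR N f u) := by
  refine ⟨?_, ?_, ?_⟩
  · intro s hs
    by_cases hsu : s < u
    · refine ⟨u - s, by linarith, fun w hw => ?_⟩
      have hwu : w < u := by have := hw.2; linarith
      show truncR N f u w = truncR N f u s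
      unfold truncR
      rw [if_pos hwu, if_pos hsu]
    · obtain ⟨ε1, hε1, hc1⟩ := hf.1 s hs
      refine ⟨ε1, hε1, fun w hw => ?_⟩
      have hwu : ¬ w < u := fun hc => hsu (lt_of_le_of_lt hw.1 hc)
      show truncR N f u w = truncR N f u s
      unfold truncR
      rw [if_neg hwu, if_neg hsu]
      exact hc1 w hw
  · refine Set.Finite.subset (Set.Finite.union hf.2.1 (Set.finite_singleton u)) ?_
    intro s hs
    by_contra hnot
    simp only [Set.mem_union, Set.mem_setOf_eq, Set.mem_singleton_iff, not_or, not_and,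
      not_not] at hnot
    refine hs.2 ?_
    rcases lt_or_gt_of_ne hnot.2 with hlt | hgt
    · refine ⟨u - s, by linarith, fun w hw => ?_⟩
      have hwu : w < u := by have := hw.2; linarith
      show truncR N f u w = truncR N f u s
      unfold truncR
      rw [if_pos hwu, if_pos hlt]
    · obtain ⟨ε1, hε1, hc1⟩ := hnot.1 hs.1
      refine ⟨min ε1 (s - u), lt_min hε1 (by linarith), fun w hw => ?_⟩
      have hwu : ¬ w < u := fun hc => by
        have h1 : s - min ε1 (s-u) < w := hw.1
        have := min_le_right ε1 (s - u)
        linarith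
      have hw1 : s - ε1 < w := lt_of_le_of_lt (by have := min_le_left ε1 (s-u); linarith) hw.1
      have hw2 : w < s + ε1 := lt_of_lt_of_le hw.2 (by have := min_le_left ε1 (s-u); linarith)
      have hsu' : ¬ s < u := not_lt.2 hgt.le
      show truncR N f u w = truncR N f u s
      unfold truncR
      rw [if_neg hwu, if_neg hsu']
      exact hc1 w ⟨hw1, hw2⟩
  · intro s hs
    show (if s < u then ∅ else f s) = ∅
    split
    · rfl
    · exact hf.2.2 s hs

lemma isState_varpi (N : ℕ) (hN : 0 < N) : IsState N (varpi N) := by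
  have hvim : varpi N = (fun j : Fin N =>
      (fun s => if s ∈ Set.Ico (0:ℝ) 1 then {j} else ∅ : Lin N)) '' Set.univ := by
    ext f
    simp only [varpi, Set.mem_setOf_eq, Set.image_univ, Set.mem_range]
    constructor
    · rintro ⟨j, rfl⟩; exact ⟨j, rfl⟩
    · rintro ⟨j, rfl⟩; exact ⟨j, rfl⟩
  refine ⟨?_, ?_, ?_, ?_⟩
  · rw [hvim]; exact Set.Finite.image _ (Set.finite_univ)
  · rintro f ⟨j, rfl⟩
    refine ⟨?_, ?_, ?_⟩
    · intro s hs
      refine ⟨1 - s, by have := hs.2; linarith, fun w hw => ?_⟩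
      have hw' : w ∈ Set.Ico (0:ℝ) 1 := ⟨le_trans hs.1 hw.1, by have := hw.2; linarith⟩
      simp only [if_pos hw', if_pos hs]
    · refine Set.Finite.subset (Set.finite_empty) ?_
      intro s hs
      exfalso
      refine hs.2 ⟨min s (1 - s), lt_min hs.1.1 (by have := hs.1.2; linarith), fun w hw => ?_⟩
      have h1 : (0:ℝ) < w := by
        have := hw.1; have := min_le_left s (1 - s); linarith
      have h2 : w < 1 := by
        have := hw.2; have := min_le_right s (1 - s); linarith
      have hw' : w ∈ Set.Ico (0:ℝ) 1 := ⟨h1.le, h2⟩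
      have hs' : s ∈ Set.Ico (0:ℝ) 1 := ⟨hs.1.1.le, hs.1.2⟩
      simp only [if_pos hw', if_pos hs']
    · intro s hs
      simp only [if_neg hs]
  · rintro f ⟨j, rfl⟩
    refine ⟨0, ⟨le_refl 0, one_pos⟩, ?_⟩
    have h0 : (0:ℝ) ∈ Set.Ico (0:ℝ) 1 := ⟨le_refl 0, one_pos⟩
    simp only [if_pos h0]
    exact Finset.singleton_ne_empty j
  · intro s hs
    constructor
    · intro n
      refine ⟨_, ⟨n, rfl⟩, ?_⟩
      simp only [if_pos hs, Finset.mem_singleton]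
    · rintro f ⟨j, rfl⟩ g ⟨k, rfl⟩ hfg
      have hjk : j ≠ k := by
        rintro rfl; exact hfg rfl
      simp only [if_pos hs]
      simp only [Finset.disjoint_singleton_left, Finset.mem_singleton]
      exact hjk

lemma isState_coal (N : ℕ) (x : Set (Lin N)) (hx : IsState N x)
    (f g : Lin N) (hf : f ∈ x) (hg : g ∈ x) (hfg : f ≠ g) :
    IsState N (coal N x f g) := by
  obtain ⟨hfin, hmem, hnemp, hpart⟩ := hx
  refine ⟨?_, ?_, ?_, ?_⟩
  · exact Set.Finite.insert _ hfin.diff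
  · rintro h (rfl | hh)
    · exact memS_join N f g (hmem f hf) (hmem g hg)
    · exact hmem h hh.1
  · rintro h (rfl | hh)
    · obtain ⟨s, hs, hfs⟩ := hnemp f hf
      refine ⟨s, hs, fun hc => hfs ?_⟩
      have : f s ∪ g s = ∅ := hc
      exact Finset.union_eq_empty.1 this |>.1
    · exact hnemp h hh.1
  · intro s hs
    constructor
    · intro n
      obtain ⟨h, hh, hnh⟩ := (hpart s hs).1 n
      by_cases hhf : h = f
      · exact ⟨join N f g, Set.mem_insert _ _, Finset.mem_union_left _ (hhf ▸ hnh)⟩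
      · by_cases hhg : h = g
        · exact ⟨join N f g, Set.mem_insert _ _, Finset.mem_union_right _ (hhg ▸ hnh)⟩
        · exact ⟨h, Set.mem_insert_of_mem _ ⟨hh, by simp [hhf, hhg]⟩, hnh⟩
    · have hdis : ∀ h ∈ x \ {f, g}, Disjoint ((join N f g) s) (h s) := by
        rintro h ⟨hhx, hhfg⟩
        simp only [Set.mem_insert_iff, Set.mem_singleton_iff, not_or] at hhfg
        have d1 : Disjoint (f s) (h s) := (hpart s hs).2 f hf h hhx (Ne.symm hhfg.1)
        have d2 : Disjoint (g s) (h s) := (hpart s hs).2 g hg h hhx (Ne.symm hhfg.2)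
        exact Finset.disjoint_union_left.2 ⟨d1, d2⟩
      rintro a (rfl | ha) b (rfl | hb) hab
      · exact absurd rfl hab
      · exact hdis b hb
      · exact (hdis a ha).symm
      · exact (hpart s hs).2 a ha.1 b hb.1 hab

lemma isState_recomb (N : ℕ) (hN : 0 < N) (x : Set (Lin N)) (hx : IsState N x)
    (f : Lin N) (hf : f ∈ x) (u : ℝ) (hbu : bOf N x f < u) (hue : u < eOf N f) :
    IsState N (recomb N x f u) := by
  have hu0 : 0 < u := lt_of_le_of_lt (bOf_nonneg N x f) hbu
  obtain ⟨sL, hsL, hsLu, hfsL⟩ := nonempty_below N hN x hx f hf u hbu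
  obtain ⟨sR, hsRu, hsR1, hfsR⟩ := nonempty_above N x hx f hf u hue
  obtain ⟨hfin, hmem, hnemp, hpart⟩ := hx
  refine ⟨?_, ?_, ?_, ?_⟩
  · exact Set.Finite.insert _ (Set.Finite.insert _ hfin.diff)
  · rintro h (rfl | rfl | hh)
    · exact memS_truncL N f u (hmem f hf)
    · exact memS_truncR N f u (hmem f hf)
    · exact hmem h hh.1
  · rintro h (rfl | rfl | hh)
    · refine ⟨sL, hsL, ?_⟩
      show (if sL < u then f sL else ∅) ≠ ∅
      rw [if_pos hsLu]; exact hfsL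
    · refine ⟨sR, ⟨by linarith, hsR1⟩, ?_⟩
      show (if sR < u then ∅ else f sR) ≠ ∅
      rw [if_neg (not_lt.2 hsRu.le)]; exact hfsR
    · exact hnemp h hh.1
  · intro s hs
    have htL : truncL N f u s = if s < u then f s else ∅ := rfl
    have htR : truncR N f u s = if s < u then ∅ else f s := rfl
    constructor
    · intro n
      obtain ⟨h, hh, hnh⟩ := (hpart s hs).1 n
      by_cases hhf : h = f
      · rw [hhf] at hnh
        by_cases hsu : s < u
        · exact ⟨truncL N f u, Set.mem_insert _ _, by rw [htL, if_pos hsu]; exact hnh⟩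
        · exact ⟨truncR N f u, Set.mem_insert_of_mem _ (Set.mem_insert _ _),
            by rw [htR, if_neg hsu]; exact hnh⟩
      · exact ⟨h, Set.mem_insert_of_mem _ (Set.mem_insert_of_mem _ ⟨hh, hhf⟩), hnh⟩
    · have dLR : Disjoint (truncL N f u s) (truncR N f u s) := by
        rw [htL, htR]
        by_cases hsu : s < u
        · rw [if_pos hsu, if_pos hsu]; exact Finset.disjoint_empty_right _
        · rw [if_neg hsu, if_neg hsu]; exact Finset.disjoint_empty_left _
      have dLh : ∀ h ∈ x \ {f}, Disjoint (truncL N f u s) (h s) := by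
        rintro h ⟨hhx, hhf⟩
        rw [htL]
        by_cases hsu : s < u
        · rw [if_pos hsu]
          exact (hpart s hs).2 f hf h hhx (Ne.symm hhf)
        · rw [if_neg hsu]; exact Finset.disjoint_empty_left _
      have dRh : ∀ h ∈ x \ {f}, Disjoint (truncR N f u s) (h s) := by
        rintro h ⟨hhx, hhf⟩
        rw [htR]
        by_cases hsu : s < u
        · rw [if_pos hsu]; exact Finset.disjoint_empty_left _
        · rw [if_neg hsu]
          exact (hpart s hs).2 f hf h hhx (Ne.symm hhf)
      rintro a (rfl | rfl | ha) b (rfl | rfl | hb) hab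
      · exact absurd rfl hab
      · exact dLR
      · exact dLh b hb
      · exact dLR.symm
      · exact absurd rfl hab
      · exact dRh b hb
      · exact (dLh a ha).symm
      · exact (dRh a ha).symm
      · exact (hpart s hs).2 a ha.1 b hb.1 hab

lemma isState_step (N : ℕ) (hN : 0 < N) (x y : Set (Lin N)) (hx : IsState N x)
    (h : EStep N x y) : IsState N y := by
  rcases h with ⟨f, hf, g, hg, hfg, rfl⟩ | ⟨f, hf, u, hbu, hue, rfl⟩
  · exact isState_coal N x hx f g hf hg hfg
  · exact isState_recomb N hN x hx f hf u hbu hue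

lemma bp_finite (N : ℕ) (x : Set (Lin N)) (hx : IsState N x) : (Bp N x).Finite := by
  have : Bp N x ⊆ ⋃ f ∈ hx.1.toFinset, {s ∈ Set.Ioo (0:ℝ) 1 | ¬ ContAt N f s} := by
    rintro s ⟨hs, f, hfx, hcf⟩
    exact Set.mem_biUnion (hx.1.mem_toFinset.2 hfx) ⟨hs, hcf⟩
  refine Set.Finite.subset ?_ this
  refine Set.Finite.biUnion (Set.finite_mem_finset _) ?_
  intro f hfx
  exact (hx.2.1 f (hx.1.mem_toFinset.1 hfx)).2.1

lemma BpG_subset (N : ℕ) (g : ℝ → Set (Lin N)) : BpG N g ⊆ Set.Ioo (0:ℝ) 1 := by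
  rintro s ⟨t, ht, hs, _⟩
  exact hs

/-- along any ARG `g ∈ G`, for every `t` the projected ancestral
material `𝔖(g(t))` (vectors of values at `S₀ = 0 < S₁ < ⋯ < S_m`, the ordered
breakpoints of `g`) is a finite set of non-null vectors whose nonempty i-th
coordinates partition `{1,…,N}` for each coordinate `i`. -/
theorem frakS_partition (N : ℕ) (hN : 0 < N) (g : ℝ → Set (Lin N)) (hg : InG N g) :
    (BpG N g).Finite ∧
    ∀ (m : ℕ) (S : ℕ → ℝ), S 0 = 0 →
      (∀ i j, i < j → j ≤ m → S i < S j) →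
      {s : ℝ | ∃ i ≤ m, s = S i} = insert (0:ℝ) (BpG N g) →
      ∀ t : ℝ, 0 ≤ t →
        ∀ SS : Set (ℕ → Finset (Fin N)),
          SS = {v | ∃ f ∈ g t, v = fun i => if i ≤ m then f (S i) else ∅} →
          SS.Finite ∧
          (∀ i ≤ m, ∀ n : Fin N, ∃ v ∈ SS, n ∈ v i) ∧
          (∀ i ≤ m, ∀ v ∈ SS, ∀ w ∈ SS, v ≠ w → Disjoint (v i) (w i)) ∧
          (∀ v ∈ SS, ∃ i ≤ m, v i ≠ ∅) := by
  obtain ⟨n, τ, st, hτ0, hτmono, hst0, hstep, hgτ, hgn, _⟩ := hg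
  -- each state along the path is a state
  have hstate : ∀ i ≤ n, IsState N (st i) := by
    intro i
    induction i with
    | zero => intro _; rw [hst0]; exact isState_varpi N hN
    | succ k ih =>
      intro hk
      have hkn : k < n := hk
      exact isState_step N hN (st k) (st (k+1)) (ih hkn.le) (hstep k hkn)
  -- every value of g is one of the states
  have haux : ∀ k, ∀ t : ℝ, 0 ≤ t → t < τ k → ∃ i, i < k ∧ τ i ≤ t ∧ t < τ (i+1) := by
    intro k
    induction k with
    | zero => intro t ht htk; rw [hτ0] at htk; linarith
    | succ k ih =>
      intro t ht htk
      by_cases hkt : τ k ≤ t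
      · exact ⟨k, Nat.lt_succ_self k, hkt, htk⟩
      · obtain ⟨i, hik, h1, h2⟩ := ih t ht (not_le.1 hkt)
        exact ⟨i, Nat.lt_succ_of_lt hik, h1, h2⟩
  have hval : ∀ t : ℝ, 0 ≤ t → ∃ i ≤ n, g t = st i := by
    intro t ht
    by_cases hnt : τ n ≤ t
    · exact ⟨n, le_refl n, hgn t hnt⟩
    · obtain ⟨i, hik, h1, h2⟩ := haux n t ht (not_le.1 hnt)
      exact ⟨i, hik.le, hgτ i hik t h1 h2⟩
  -- BpG is finite
  have hBpfin : (BpG N g).Finite := by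
    have hsub : BpG N g ⊆ ⋃ i ∈ Finset.range (n+1), Bp N (st i) := by
      rintro s ⟨t, ht, hs⟩
      obtain ⟨i, hin, hgt⟩ := hval t ht
      rw [hgt] at hs
      exact Set.mem_biUnion (Finset.mem_range.2 (Nat.lt_succ_of_le hin)) hs
    refine Set.Finite.subset ?_ hsub
    refine Set.Finite.biUnion (s := {a | a ∈ Finset.range (n+1)}) (t := fun i => Bp N (st i)) (Set.finite_mem_finset _) ?_
    intro i hi
    exact bp_finite N (st i) (hstate i (Nat.lt_succ_iff.1 (Finset.mem_range.1 hi)))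
  refine ⟨hBpfin, ?_⟩
  intro m S hS0 hSmono hSeq t ht SS hSS
  obtain ⟨i₀, hi₀n, hgt⟩ := hval t ht
  have hxst : IsState N (g t) := hgt ▸ hstate i₀ hi₀n
  obtain ⟨hfin, hmem, hnemp, hpart⟩ := hxst
  -- each S i lies in [0,1)
  have hSmem : ∀ i ≤ m, S i ∈ Set.Ico (0:ℝ) 1 := by
    intro i hi
    have h1 : S i ∈ {s : ℝ | ∃ j ≤ m, s = S j} := ⟨i, hi, rfl⟩
    rw [hSeq] at h1
    rcases Set.mem_insert_iff.1 h1 with h | h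
    · rw [h]; exact ⟨le_refl 0, one_pos⟩
    · have := BpG_subset N g h
      exact ⟨this.1.le, this.2⟩
  have hSSmem : ∀ v, v ∈ SS ↔ ∃ f ∈ g t, v = fun i => if i ≤ m then f (S i) else ∅ := by
    intro v; rw [hSS]; rfl
  refine ⟨?_, ?_, ?_, ?_⟩
  · -- finiteness
    have : SS ⊆ (fun f : Lin N => fun i => if i ≤ m then f (S i) else ∅) '' (g t) := by
      intro v hv
      obtain ⟨f, hf, rfl⟩ := (hSSmem v).1 hv
      exact ⟨f, hf, rfl⟩
    exact Set.Finite.subset (hfin.image _) this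
  · -- coverage
    intro i hi nn
    obtain ⟨f, hfx, hnf⟩ := (hpart (S i) (hSmem i hi)).1 nn
    refine ⟨_, (hSSmem _).2 ⟨f, hfx, rfl⟩, ?_⟩
    simp only [if_pos hi]
    exact hnf
  · -- disjointness
    intro i hi v hv w hw hvw
    obtain ⟨f, hfx, rfl⟩ := (hSSmem v).1 hv
    obtain ⟨h, hhx, rfl⟩ := (hSSmem w).1 hw
    have hfh : f ≠ h := by rintro rfl; exact hvw rfl
    have := (hpart (S i) (hSmem i hi)).2 f hfx h hhx hfh
    simpa only [if_pos hi] using this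
  · -- non-null
    intro v hv
    obtain ⟨f, hfx, rfl⟩ := (hSSmem v).1 hv
    obtain ⟨s, hsIco, hfs⟩ := hnemp f hfx
    set Fs := (Finset.range (m+1)).filter (fun j => S j ≤ s) with hFs
    have h0F : 0 ∈ Fs := by
      refine Finset.mem_filter.2 ⟨Finset.mem_range.2 (Nat.succ_pos m), ?_⟩
      rw [hS0]; exact hsIco.1
    have hFne : Fs.Nonempty := ⟨0, h0F⟩
    set i := Fs.max' hFne with hi
    have hiF : i ∈ Fs := Fs.max'_mem hFne
    have him : i ≤ m := Nat.lt_succ_iff.1 (Finset.mem_range.1 (Finset.mem_filter.1 hiF).1)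
    have hSis : S i ≤ s := (Finset.mem_filter.1 hiF).2
    have hkey : f s = f (S i) := by
      refine const_of_contAt N f (S i) s hSis ((hmem f hfx).1 (S i) (hSmem i him)) ?_
      intro w hw1 hw2
      by_contra hcont
      have hw01 : w ∈ Set.Ioo (0:ℝ) 1 :=
        ⟨lt_of_le_of_lt (hSmem i him).1 hw1, lt_of_le_of_lt hw2 hsIco.2⟩
      have hwBp : w ∈ BpG N g := ⟨t, ht, hw01, f, hfx, hcont⟩
      have hwS : w ∈ {s : ℝ | ∃ j ≤ m, s = S j} := by
        rw [hSeq]; exact Set.mem_insert_of_mem _ hwBp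
      obtain ⟨j, hjm, hwj⟩ := hwS
      have hjF : j ∈ Fs := Finset.mem_filter.2
        ⟨Finset.mem_range.2 (Nat.lt_succ_of_le hjm), by rw [← hwj]; exact hw2⟩
      have hji : j ≤ i := Fs.le_max' j hjF
      have hSji : S j ≤ S i := by
        rcases eq_or_lt_of_le hji with he | hl
        · rw [he]
        · exact (hSmono j i hl him).le
      rw [← hwj] at hSji
      linarith
    exact ⟨i, him, by simp only [if_pos him]; rw [← hkey]; exact hfs⟩
end CWR
end
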